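/- Let (Ω, 𝓕, P) be a probability space and let τ, D, D' : Ω → ℝ be random variables such that τ is uniformly distributed on [0,1], D and D' are square-integrable with E[D] = E[D'] = 0, and τ, D, D' are mutually independent. Then E[(τ²·D + (1−τ)²·D')²] = (1/5)·(E[D²] + E[D'²]). In particular, the map F ↦ S(F) sending the joint law to the law of τ²X + (1−τ)²X' + C (for any toll C) is a contraction with factor √(2/5) in the Wasserstein L² metric on zero-mean, finite-second-moment distributions. -/

import Mathlib

/-!
Expanding the square, the cross term vanishes because `τ²(1-τ)²D` is independent of the centred
`D'`, and by independence the two diagonal terms factor as `E[τ⁴] E[D²]` and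
`E[(1-τ)⁴] E[D'²]`, where `E[τ⁴] = E[(1-τ)⁴] = ∫₀¹ x⁴ dx = 1/5`.
-/

open MeasureTheory

namespace ProbabilityTheory

variable {Ω : Type*} [MeasurableSpace Ω] {μ : Measure Ω}

theorem integral_add_sq_of_memLp {U V : Ω → ℝ} (hU : MemLp U 2 μ) (hV : MemLp V 2 μ) :
    ∫ ω, (U ω + V ω) ^ 2 ∂μ =
      ∫ ω, U ω ^ 2 ∂μ + 2 * ∫ ω, U ω * V ω ∂μ + ∫ ω, V ω ^ 2 ∂μ := by
  have hUV : Integrable (fun ω => 2 * (U ω * V ω)) μ := (hU.integrable_mul hV).const_mul 2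
  simp_rw [add_sq, mul_assoc]
  rw [integral_add _ hV.integrable_sq, integral_add hU.integrable_sq hUV, integral_const_mul]
  exact hU.integrable_sq.add hUV

theorem IndepFun.memLp_two_mul {A B : Ω → ℝ} (h : IndepFun A B μ) (hA : MemLp A 2 μ)
    (hB : MemLp B 2 μ) : MemLp (A * B) 2 μ := by
  rw [memLp_two_iff_integrable_sq (hA.aestronglyMeasurable.mul hB.aestronglyMeasurable)]
  simp_rw [Pi.mul_apply, mul_pow]
  exact (h.comp (measurable_id.pow_const 2) (measurable_id.pow_const 2)).integrable_mul
    hA.integrable_sq hB.integrable_sq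

theorem integral_sq_comp_mul_add_comp_mul {X D D' : Ω → ℝ} {f g : ℝ → ℝ}
    (hf : Measurable f) (hg : Measurable g) (hX : AEMeasurable X μ)
    (hfX : MemLp (fun ω => f (X ω)) 2 μ) (hgX : MemLp (fun ω => g (X ω)) 2 μ)
    (hD : MemLp D 2 μ) (hD' : MemLp D' 2 μ) (hD'_zero : ∫ ω, D' ω ∂μ = 0)
    (hindep : iIndepFun ![X, D, D'] μ) :
    ∫ ω, (f (X ω) * D ω + g (X ω) * D' ω) ^ 2 ∂μ =
      (∫ ω, f (X ω) ^ 2 ∂μ) * (∫ ω, D ω ^ 2 ∂μ) +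
        (∫ ω, g (X ω) ^ 2 ∂μ) * ∫ ω, D' ω ^ 2 ∂μ := by
  have hXD : IndepFun X D μ := hindep.indepFun (i := 0) (j := 1) (by decide)
  have hXD' : IndepFun X D' μ := hindep.indepFun (i := 0) (j := 2) (by decide)
  have hmeas : ∀ i, AEMeasurable (![X, D, D'] i) μ := fun i => by
    fin_cases i
    exacts [hX, hD.aestronglyMeasurable.aemeasurable, hD'.aestronglyMeasurable.aemeasurable]
  have hcross : ∫ ω, f (X ω) * D ω * (g (X ω) * D' ω) ∂μ = 0 := by
    have hpair : IndepFun (fun ω => (X ω, D ω)) D' μ :=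
      hindep.indepFun_prodMk₀ hmeas 0 1 2 (by decide) (by decide)
    have h := hpair.integral_fun_comp_mul_comp
      (f := fun p : ℝ × ℝ => f p.1 * p.2 * g p.1) (g := id)
      (hX.prodMk hD.aestronglyMeasurable.aemeasurable) hD'.aestronglyMeasurable.aemeasurable
      (by fun_prop) measurable_id.aestronglyMeasurable
    dsimp only [id] at h
    simp_rw [← mul_assoc]
    rw [h, hD'_zero, mul_zero]
  have hU : MemLp (fun ω => f (X ω) * D ω) 2 μ :=
    (hXD.comp hf measurable_id).memLp_two_mul hfX hD
  have hV : MemLp (fun ω => g (X ω) * D' ω) 2 μ :=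
    (hXD'.comp hg measurable_id).memLp_two_mul hgX hD'
  rw [integral_add_sq_of_memLp hU hV, hcross]
  simp_rw [mul_pow]
  rw [hXD.integral_fun_comp_mul_comp (f := fun x => f x ^ 2) (g := fun x => x ^ 2) hX
      hD.aestronglyMeasurable.aemeasurable (by fun_prop) (by fun_prop),
    hXD'.integral_fun_comp_mul_comp (f := fun x => g x ^ 2) (g := fun x => x ^ 2) hX
      hD'.aestronglyMeasurable.aemeasurable (by fun_prop) (by fun_prop)]
  ring

section UniformUnitInterval

variable {τ : Ω → ℝ} (hτ : μ.map τ = volume.restrict (Set.Icc 0 1))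
include hτ

theorem aemeasurable_of_map_eq_restrict_Icc : AEMeasurable τ μ :=
  AEMeasurable.of_map_ne_zero (by simp [hτ])

theorem integral_comp_of_map_eq_restrict_Icc {φ : ℝ → ℝ} (hφ : Continuous φ) :
    ∫ ω, φ (τ ω) ∂μ = ∫ x in (0 : ℝ)..1, φ x := by
  rw [← integral_map (aemeasurable_of_map_eq_restrict_Icc hτ) hφ.aestronglyMeasurable, hτ,
    integral_Icc_eq_integral_Ioc, intervalIntegral.integral_of_le zero_le_one]

theorem memLp_two_comp_of_map_eq_restrict_Icc {φ : ℝ → ℝ} (hφ : Continuous φ) :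
    MemLp (fun ω => φ (τ ω)) 2 μ := by
  have hτm := aemeasurable_of_map_eq_restrict_Icc hτ
  rw [memLp_two_iff_integrable_sq (hφ.comp_aestronglyMeasurable hτm.aestronglyMeasurable)]
  refine (integrable_map_measure (g := fun x => φ x ^ 2) (by fun_prop) hτm).mp ?_
  rw [hτ]
  exact (hφ.pow 2).integrableOn_Icc

end UniformUnitInterval

end ProbabilityTheory

open ProbabilityTheory

theorem stmt18 {Ω : Type*} [MeasurableSpace Ω] (μ : Measure Ω)
    (τ D D' : Ω → ℝ)
    (hτ : μ.map τ = volume.restrict (Set.Icc (0 : ℝ) 1))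
    (hD : MemLp D 2 μ) (hD' : MemLp D' 2 μ)
    (hED' : ∫ ω, D' ω ∂μ = 0)
    (hindep : iIndepFun ![τ, D, D'] μ) :
    ∫ ω, (τ ω ^ 2 * D ω + (1 - τ ω) ^ 2 * D' ω) ^ 2 ∂μ =
      (1 / 5) * ((∫ ω, D ω ^ 2 ∂μ) + ∫ ω, D' ω ^ 2 ∂μ) := by
  have hfourth : ∫ ω, (τ ω ^ 2) ^ 2 ∂μ = 1 / 5 := by
    rw [integral_comp_of_map_eq_restrict_Icc hτ (φ := fun x => (x ^ 2) ^ 2) (by fun_prop)]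
    simp_rw [← pow_mul]
    norm_num [integral_pow]
  have hfourth' : ∫ ω, ((1 - τ ω) ^ 2) ^ 2 ∂μ = 1 / 5 := by
    rw [integral_comp_of_map_eq_restrict_Icc hτ (φ := fun x => ((1 - x) ^ 2) ^ 2) (by fun_prop),
      intervalIntegral.integral_comp_sub_left (fun x => (x ^ 2) ^ 2)]
    simp_rw [← pow_mul]
    norm_num [integral_pow]
  rw [integral_sq_comp_mul_add_comp_mul (f := fun x => x ^ 2) (g := fun x => (1 - x) ^ 2)
    (by fun_prop) (by fun_prop) (aemeasurable_of_map_eq_restrict_Icc hτ)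
    (memLp_two_comp_of_map_eq_restrict_Icc hτ (φ := fun x => x ^ 2) (by fun_prop))
    (memLp_two_comp_of_map_eq_restrict_Icc hτ (φ := fun x => (1 - x) ^ 2) (by fun_prop))
    hD hD' hED' hindep, hfourth, hfourth']
  ring
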